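/- arXiv:2511.20556 — 3 statements merged into one kernel-verified Lean document; each statement's English description precedes it below -/
import Mathlib

section
/- Let H ∈ (0,1/2), β' ∈ (0,H) and β ∈ (H,1/2). There exists a constant C = C(H, β, β') > 0 such that for all 0 ≤ v ≤ s ≤ t, 0 ≤ ∫_0^v ( (t−r)^{H−1/2} − (s−r)^{H−1/2} )·( (s−r)^{H−1/2} − (v−r)^{H−1/2} ) dr ≤ C·( ((t−s)^β (s−v)^β) ∨ ((t−s)^{β'} (s−v)^{β'}) ). -/
open MeasureTheory Set

namespace RLX

lemma interp {X P Q θ : ℝ} (hX : 0 ≤ X) (hP : 0 ≤ P) (hQ : 0 ≤ Q)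
    (h1 : X ≤ P) (h2 : X ≤ Q) (hθ₀ : 0 ≤ θ) (hθ₁ : θ ≤ 1) :
    X ≤ P ^ (1 - θ) * Q ^ θ := by
  rcases eq_or_lt_of_le hX with h | h
  · have hpos : (0:ℝ) ≤ P ^ (1 - θ) * Q ^ θ := by positivity
    linarith [h.symm ▸ hpos]
  · calc X = X ^ (1 - θ) * X ^ θ := by
          rw [← Real.rpow_add h, sub_add_cancel, Real.rpow_one]
      _ ≤ P ^ (1 - θ) * Q ^ θ :=
          mul_le_mul (Real.rpow_le_rpow hX h1 (by linarith))
            (Real.rpow_le_rpow hX h2 hθ₀) (Real.rpow_nonneg hX _) (Real.rpow_nonneg hP _)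

lemma bernoulli_neg {s p : ℝ} (hs : 0 ≤ s) (hp1 : -1 ≤ p) (hp2 : p ≤ 0) :
    1 + p * s ≤ (1 + s) ^ p := by
  have h1s : (0:ℝ) < 1 + s := by linarith
  have h := rpow_one_add_le_one_add_mul_self (s := s) (by linarith) (p := -p)
    (by linarith) (by linarith)
  have hpos : 0 < (1 + s) ^ (-p) := Real.rpow_pos_of_pos h1s _
  have h2 : (1 + s) ^ p = ((1 + s) ^ (-p))⁻¹ := by
    rw [← Real.rpow_neg h1s.le, neg_neg]
  rcases le_or_gt (1 + p * s) 0 with h3 | h3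
  · exact h3.trans (Real.rpow_pos_of_pos h1s p).le
  · rw [h2, inv_eq_one_div, le_div_iff₀ hpos]
    nlinarith [sq_nonneg (p * s)]

lemma mvt_bound {x c α : ℝ} (hx : 0 < x) (hc : 0 ≤ c) (hα₁ : -1 ≤ α) (hα₂ : α ≤ 0) :
    x ^ α - (x + c) ^ α ≤ -α * c * x ^ (α - 1) := by
  have hs : 0 ≤ c / x := div_nonneg hc hx.le
  have hb := bernoulli_neg hs hα₁ hα₂
  have hxc : x + c = x * (1 + c / x) := by field_simp
  have h1 : (x + c) ^ α = x ^ α * (1 + c / x) ^ α := by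
    rw [hxc, Real.mul_rpow hx.le (by positivity)]
  have h2 : x ^ α * (c / x) = c * x ^ (α - 1) := by
    rw [Real.rpow_sub hx, Real.rpow_one]; field_simp
  calc x ^ α - (x + c) ^ α = x ^ α * (1 - (1 + c / x) ^ α) := by rw [h1]; ring
    _ ≤ x ^ α * (-α * (c / x)) := by
        apply mul_le_mul_of_nonneg_left ?_ (Real.rpow_nonneg hx.le _)
        nlinarith
    _ = -α * c * x ^ (α - 1) := by
        rw [show x ^ α * (-α * (c / x)) = -α * (x ^ α * (c / x)) by ring, h2]; ring

lemma integrable_vsub (v γ A B : ℝ) (hγ : -1 < γ) :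
    IntervalIntegrable (fun r => (v - r) ^ γ) volume A B := by
  have := (intervalIntegral.intervalIntegrable_rpow' (a := v - A) (b := v - B) hγ).comp_sub_left v
  simpa using this

lemma ae_ne_pt (v : ℝ) : ∀ᵐ (x : ℝ), x ≠ v := by
  rw [ae_iff]
  simp only [ne_eq, not_not]
  simpa [Set.setOf_eq_eq_singleton] using Real.volume_singleton

lemma nonneg_int (α v s t : ℝ) (hα₂ : α < 0) (hv : 0 ≤ v) (hvs : v ≤ s) (hst : s ≤ t) :
    0 ≤ ∫ r in (0:ℝ)..v,
        ((t - r) ^ α - (s - r) ^ α) * ((s - r) ^ α - (v - r) ^ α) := by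
  apply intervalIntegral.integral_nonneg_of_ae_restrict hv
  filter_upwards [ae_restrict_of_ae (ae_ne_pt v), ae_restrict_mem measurableSet_Icc]
    with r hrv hr
  obtain ⟨hr0, hrv'⟩ := hr
  have hrv2 : r < v := lt_of_le_of_ne hrv' hrv
  have hvr : 0 < v - r := by linarith
  have hsr : 0 < s - r := by linarith
  have hX : 0 ≤ (s - r) ^ α - (t - r) ^ α :=
    sub_nonneg.2 (Real.rpow_le_rpow_of_nonpos hsr (by linarith) hα₂.le)
  have hY : 0 ≤ (v - r) ^ α - (s - r) ^ α :=
    sub_nonneg.2 (Real.rpow_le_rpow_of_nonpos hvr (by linarith) hα₂.le)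
  have he : ((t - r) ^ α - (s - r) ^ α) * ((s - r) ^ α - (v - r) ^ α)
      = ((s - r) ^ α - (t - r) ^ α) * ((v - r) ^ α - (s - r) ^ α) := by ring
  rw [Pi.zero_apply, he]
  exact mul_nonneg hX hY

lemma key (α θ a b v s t : ℝ) (hα₁ : -(1:ℝ)/2 < α) (hα₂ : α < 0)
    (hθ₀ : 0 < θ) (hθ₁ : θ ≤ 1) (hv : 0 < v) (ha : 0 < a) (hb : 0 < b)
    (hs : s = v + b) (ht : t = s + a) :
    ∫ r in (0:ℝ)..v, ((t - r) ^ α - (s - r) ^ α) * ((s - r) ^ α - (v - r) ^ α)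
      ≤ ((-α) ^ θ / (α + 1) + (-α) ^ (1 + θ) / (θ - 2 * α))
          * (a ^ θ * b ^ (2 * α + 1 - θ)) := by
  have hna : (0:ℝ) < -α := by linarith
  have hα1' : (0:ℝ) < α + 1 := by linarith
  have hθ2α : (0:ℝ) < θ - 2 * α := by linarith
  set c₁ : ℝ := (-α) ^ θ * a ^ θ * b ^ (α - θ) with hc₁def
  set c₂ : ℝ := (-α) ^ (1 + θ) * a ^ θ * b with hc₂def
  have hc₁ : 0 ≤ c₁ := by positivity
  have hc₂ : 0 ≤ c₂ := by positivity
  -- interpolation bound for the first factor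
  have hXb : ∀ r ∈ Icc (0:ℝ) v,
      (s - r) ^ α - (t - r) ^ α ≤ (-α) ^ θ * a ^ θ * (s - r) ^ (α - θ) := by
    intro r hr
    obtain ⟨hr0, hrv⟩ := hr
    have hsr : 0 < s - r := by rw [hs]; linarith
    have hX0 : 0 ≤ (s - r) ^ α - (t - r) ^ α :=
      sub_nonneg.2 (Real.rpow_le_rpow_of_nonpos hsr (by rw [ht]; linarith) hα₂.le)
    have hX1 : (s - r) ^ α - (t - r) ^ α ≤ (s - r) ^ α := by
      have : 0 ≤ (t - r) ^ α := Real.rpow_nonneg (by rw [ht, hs]; linarith) _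
      linarith
    have hX2 : (s - r) ^ α - (t - r) ^ α ≤ -α * a * (s - r) ^ (α - 1) := by
      have h := mvt_bound hsr ha.le (by linarith) hα₂.le
      have he : s - r + a = t - r := by rw [ht]; ring
      rwa [he] at h
    have h := interp hX0 (Real.rpow_nonneg hsr.le α) (by positivity) hX1 hX2 hθ₀.le hθ₁
    have e1 : ((s - r) ^ α) ^ (1 - θ) = (s - r) ^ (α * (1 - θ)) :=
      (Real.rpow_mul hsr.le α (1 - θ)).symm
    have e2 : (-α * a * (s - r) ^ (α - 1)) ^ θ
        = (-α) ^ θ * a ^ θ * (s - r) ^ ((α - 1) * θ) := by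
      rw [Real.mul_rpow (by positivity) (Real.rpow_nonneg hsr.le _),
        Real.mul_rpow hna.le ha.le, ← Real.rpow_mul hsr.le]
    have e3 : (s - r) ^ (α * (1 - θ)) * (s - r) ^ ((α - 1) * θ) = (s - r) ^ (α - θ) := by
      rw [← Real.rpow_add hsr]; congr 1; ring
    calc (s - r) ^ α - (t - r) ^ α
        ≤ ((s - r) ^ α) ^ (1 - θ) * (-α * a * (s - r) ^ (α - 1)) ^ θ := h
      _ = (-α) ^ θ * a ^ θ * (s - r) ^ (α - θ) := by
          rw [e1, e2, show (s - r) ^ (α * (1 - θ)) * ((-α) ^ θ * a ^ θ * (s - r) ^ ((α - 1) * θ))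
            = (-α) ^ θ * a ^ θ * ((s - r) ^ (α * (1 - θ)) * (s - r) ^ ((α - 1) * θ)) from by ring,
            e3]
  -- pointwise bound valid on all of [0, v]
  have claim2 : ∀ r ∈ Icc (0:ℝ) v,
      ((t - r) ^ α - (s - r) ^ α) * ((s - r) ^ α - (v - r) ^ α) ≤ c₁ * (v - r) ^ α := by
    intro r hr
    obtain ⟨hr0, hrv⟩ := hr
    have hsr : 0 < s - r := by rw [hs]; linarith
    have hbsr : b ≤ s - r := by rw [hs]; linarith
    have hX0 : 0 ≤ (s - r) ^ α - (t - r) ^ α :=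
      sub_nonneg.2 (Real.rpow_le_rpow_of_nonpos hsr (by rw [ht]; linarith) hα₂.le)
    have hXc : (s - r) ^ α - (t - r) ^ α ≤ c₁ := by
      refine (hXb r ⟨hr0, hrv⟩).trans ?_
      rw [hc₁def]
      exact mul_le_mul_of_nonneg_left
        (Real.rpow_le_rpow_of_nonpos hb hbsr (by linarith)) (by positivity)
    rcases eq_or_lt_of_le hrv with hrv' | hrv'
    · subst hrv'
      rw [sub_self, Real.zero_rpow hα₂.ne, mul_zero]
      have h1 : (t - r) ^ α - (s - r) ^ α ≤ 0 := by linarith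
      have h2 : 0 ≤ (s - r) ^ α := Real.rpow_nonneg hsr.le _
      nlinarith
    · have hvr : 0 < v - r := by linarith
      have hY0 : 0 ≤ (v - r) ^ α - (s - r) ^ α :=
        sub_nonneg.2 (Real.rpow_le_rpow_of_nonpos hvr (by linarith) hα₂.le)
      have hY1 : (v - r) ^ α - (s - r) ^ α ≤ (v - r) ^ α := by
        have : 0 ≤ (s - r) ^ α := Real.rpow_nonneg hsr.le _
        linarith
      calc ((t - r) ^ α - (s - r) ^ α) * ((s - r) ^ α - (v - r) ^ α)
          = ((s - r) ^ α - (t - r) ^ α) * ((v - r) ^ α - (s - r) ^ α) := by ring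
        _ ≤ c₁ * (v - r) ^ α := mul_le_mul hXc hY1 hY0 hc₁
  -- integrability of the integrand on [0, v]
  have hFmeas : Measurable fun r : ℝ =>
      ((t - r) ^ α - (s - r) ^ α) * ((s - r) ^ α - (v - r) ^ α) := by
    apply Measurable.mul <;> apply Measurable.sub <;>
      exact (measurable_const.sub measurable_id).pow measurable_const
  have hMaj : IntervalIntegrable (fun r => b ^ α * (v - r) ^ α) volume 0 v :=
    (integrable_vsub v α 0 v (by linarith)).const_mul _
  have hFint : IntervalIntegrable (fun r =>
      ((t - r) ^ α - (s - r) ^ α) * ((s - r) ^ α - (v - r) ^ α)) volume 0 v := by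
    apply hMaj.mono_fun hFmeas.aestronglyMeasurable
    filter_upwards [ae_restrict_of_ae (ae_ne_pt v), ae_restrict_mem measurableSet_uIoc]
      with r hrv hr
    rw [Set.uIoc_of_le hv.le] at hr
    obtain ⟨hr0, hrv'⟩ := hr
    have hrltv : r < v := lt_of_le_of_ne hrv' hrv
    have hvr : 0 < v - r := by linarith
    have hsr : 0 < s - r := by rw [hs]; linarith
    have hbsr : b ≤ s - r := by rw [hs]; linarith
    have hX0 : 0 ≤ (s - r) ^ α - (t - r) ^ α :=
      sub_nonneg.2 (Real.rpow_le_rpow_of_nonpos hsr (by rw [ht]; linarith) hα₂.le)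
    have hXb' : (s - r) ^ α - (t - r) ^ α ≤ b ^ α := by
      have h1 : (s - r) ^ α ≤ b ^ α := Real.rpow_le_rpow_of_nonpos hb hbsr hα₂.le
      have h2 : 0 ≤ (t - r) ^ α := Real.rpow_nonneg (by rw [ht, hs]; linarith) _
      linarith
    have hY0 : 0 ≤ (v - r) ^ α - (s - r) ^ α :=
      sub_nonneg.2 (Real.rpow_le_rpow_of_nonpos hvr (by linarith) hα₂.le)
    have hY1 : (v - r) ^ α - (s - r) ^ α ≤ (v - r) ^ α := by
      have : 0 ≤ (s - r) ^ α := Real.rpow_nonneg hsr.le _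
      linarith
    have he : ((t - r) ^ α - (s - r) ^ α) * ((s - r) ^ α - (v - r) ^ α)
        = ((s - r) ^ α - (t - r) ^ α) * ((v - r) ^ α - (s - r) ^ α) := by ring
    rw [Real.norm_eq_abs, Real.norm_eq_abs, he,
      abs_of_nonneg (mul_nonneg hX0 hY0),
      abs_of_nonneg (mul_nonneg (Real.rpow_nonneg hb.le _) (Real.rpow_nonneg hvr.le _))]
    exact mul_le_mul hXb' hY1 hY0 (Real.rpow_nonneg hb.le _)
  rcases le_or_gt b v with hbv | hbv
  · -- case b ≤ v : split the integral at v - b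
    have hw0 : (0:ℝ) ≤ v - b := by linarith
    have claim1 : ∀ r ∈ Icc (0:ℝ) (v - b),
        ((t - r) ^ α - (s - r) ^ α) * ((s - r) ^ α - (v - r) ^ α)
          ≤ c₂ * (v - r) ^ (2 * α - 1 - θ) := by
      intro r hr
      obtain ⟨hr0, hrw⟩ := hr
      have hvrb : b ≤ v - r := by linarith
      have hvr : 0 < v - r := lt_of_lt_of_le hb hvrb
      have hsr : 0 < s - r := by rw [hs]; linarith
      have hXc : (s - r) ^ α - (t - r) ^ α ≤ (-α) ^ θ * a ^ θ * (v - r) ^ (α - θ) := by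
        refine (hXb r ⟨hr0, by linarith⟩).trans ?_
        exact mul_le_mul_of_nonneg_left
          (Real.rpow_le_rpow_of_nonpos hvr (by rw [hs]; linarith) (by linarith)) (by positivity)
      have hY2 : (v - r) ^ α - (s - r) ^ α ≤ -α * b * (v - r) ^ (α - 1) := by
        have h := mvt_bound hvr hb.le (by linarith) hα₂.le
        have he : v - r + b = s - r := by rw [hs]; ring
        rwa [he] at h
      have hY0 : 0 ≤ (v - r) ^ α - (s - r) ^ α :=
        sub_nonneg.2 (Real.rpow_le_rpow_of_nonpos hvr (by rw [hs]; linarith) hα₂.le)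
      have hprod : ((-α) ^ θ * a ^ θ * (v - r) ^ (α - θ)) * (-α * b * (v - r) ^ (α - 1))
          = c₂ * (v - r) ^ (2 * α - 1 - θ) := by
        rw [hc₂def, show 2 * α - 1 - θ = (α - θ) + (α - 1) by ring, Real.rpow_add hvr,
          Real.rpow_add hna, Real.rpow_one]
        ring
      calc ((t - r) ^ α - (s - r) ^ α) * ((s - r) ^ α - (v - r) ^ α)
          = ((s - r) ^ α - (t - r) ^ α) * ((v - r) ^ α - (s - r) ^ α) := by ring
        _ ≤ ((-α) ^ θ * a ^ θ * (v - r) ^ (α - θ)) * (-α * b * (v - r) ^ (α - 1)) :=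
            mul_le_mul hXc hY2 hY0 (by positivity)
        _ = c₂ * (v - r) ^ (2 * α - 1 - θ) := hprod
    have hMaj2 : IntervalIntegrable (fun r => c₁ * (v - r) ^ α) volume (v - b) v :=
      (integrable_vsub v α (v - b) v (by linarith)).const_mul _
    have hMaj1 : IntervalIntegrable (fun r => c₂ * (v - r) ^ (2 * α - 1 - θ))
        volume 0 (v - b) := by
      apply IntervalIntegrable.const_mul
      apply ContinuousOn.intervalIntegrable
      apply ContinuousOn.rpow_const ((continuous_const.sub continuous_id).continuousOn)
      intro x hx
      rw [Set.uIcc_of_le hw0] at hx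
      exact Or.inl (by simp only [Pi.sub_apply, id_eq]; nlinarith [hx.2])
    have hsub1 : IntervalIntegrable (fun r =>
        ((t - r) ^ α - (s - r) ^ α) * ((s - r) ^ α - (v - r) ^ α)) volume 0 (v - b) :=
      hFint.mono_set (by
        rw [Set.uIcc_of_le hw0, Set.uIcc_of_le hv.le]
        exact Set.Icc_subset_Icc le_rfl (by linarith))
    have hsub2 : IntervalIntegrable (fun r =>
        ((t - r) ^ α - (s - r) ^ α) * ((s - r) ^ α - (v - r) ^ α)) volume (v - b) v :=
      hFint.mono_set (by
        rw [Set.uIcc_of_le (by linarith : v - b ≤ v), Set.uIcc_of_le hv.le]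
        exact Set.Icc_subset_Icc (by linarith) le_rfl)
    have hsplit := intervalIntegral.integral_add_adjacent_intervals hsub1 hsub2
    have hI2 : (∫ r in (v - b)..v, c₁ * (v - r) ^ α) = c₁ * (b ^ (α + 1) / (α + 1)) := by
      rw [intervalIntegral.integral_const_mul]
      congr 1
      rw [intervalIntegral.integral_comp_sub_left (fun u : ℝ => u ^ α) v,
        show v - v = (0:ℝ) by ring, show v - (v - b) = b by ring,
        integral_rpow (Or.inl (by linarith)),
        Real.zero_rpow hα1'.ne']
      ring
    have hI1 : (∫ r in (0:ℝ)..(v - b), c₂ * (v - r) ^ (2 * α - 1 - θ))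
        = c₂ * ((v ^ (2 * α - θ) - b ^ (2 * α - θ)) / (2 * α - θ)) := by
      rw [intervalIntegral.integral_const_mul]
      congr 1
      rw [intervalIntegral.integral_comp_sub_left (fun u : ℝ => u ^ (2 * α - 1 - θ)) v,
        show v - (v - b) = b by ring, show v - (0:ℝ) = v by ring,
        integral_rpow (Or.inr ⟨by intro h; linarith,
          by rw [Set.uIcc_of_le hbv]; rintro ⟨h1, -⟩; linarith⟩),
        show 2 * α - 1 - θ + 1 = 2 * α - θ by ring]
    have hP2 : (∫ r in (v - b)..v,
        ((t - r) ^ α - (s - r) ^ α) * ((s - r) ^ α - (v - r) ^ α))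
          ≤ c₁ * (b ^ (α + 1) / (α + 1)) := by
      rw [← hI2]
      exact intervalIntegral.integral_mono_on (by linarith) hsub2 hMaj2
        (fun r hr => claim2 r ⟨by linarith [hr.1], hr.2⟩)
    have hP1 : (∫ r in (0:ℝ)..(v - b),
        ((t - r) ^ α - (s - r) ^ α) * ((s - r) ^ α - (v - r) ^ α))
          ≤ c₂ * ((v ^ (2 * α - θ) - b ^ (2 * α - θ)) / (2 * α - θ)) := by
      rw [← hI1]
      exact intervalIntegral.integral_mono_on hw0 hsub1 hMaj1 claim1
    have ebb : b ^ (α - θ) * b ^ (α + 1) = b ^ (2 * α + 1 - θ) := by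
      rw [← Real.rpow_add hb]; congr 1; ring
    have hA2 : c₁ * (b ^ (α + 1) / (α + 1))
        = ((-α) ^ θ / (α + 1)) * (a ^ θ * b ^ (2 * α + 1 - θ)) := by
      rw [hc₁def, ← ebb]; ring
    have hA1 : c₂ * ((v ^ (2 * α - θ) - b ^ (2 * α - θ)) / (2 * α - θ))
        ≤ ((-α) ^ (1 + θ) / (θ - 2 * α)) * (a ^ θ * b ^ (2 * α + 1 - θ)) := by
      have hv0 : 0 ≤ v ^ (2 * α - θ) := Real.rpow_nonneg hv.le _
      have h1 : (2 * α - θ) ≠ 0 := by intro h; linarith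
      have h2 : (θ - 2 * α) ≠ 0 := hθ2α.ne'
      have e : (v ^ (2 * α - θ) - b ^ (2 * α - θ)) / (2 * α - θ)
          = (b ^ (2 * α - θ) - v ^ (2 * α - θ)) / (θ - 2 * α) := by
        field_simp
        ring
      rw [e]
      have hle : (b ^ (2 * α - θ) - v ^ (2 * α - θ)) / (θ - 2 * α)
          ≤ b ^ (2 * α - θ) / (θ - 2 * α) :=
        div_le_div_of_nonneg_right (by linarith) hθ2α.le
      have ebb2 : b ^ (1:ℝ) * b ^ (2 * α - θ) = b ^ (2 * α + 1 - θ) := by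
        rw [← Real.rpow_add hb]; congr 1; ring
      calc c₂ * ((b ^ (2 * α - θ) - v ^ (2 * α - θ)) / (θ - 2 * α))
          ≤ c₂ * (b ^ (2 * α - θ) / (θ - 2 * α)) := mul_le_mul_of_nonneg_left hle hc₂
        _ = ((-α) ^ (1 + θ) / (θ - 2 * α)) * (a ^ θ * (b ^ (1:ℝ) * b ^ (2 * α - θ))) := by
            rw [hc₂def, Real.rpow_one]; ring
        _ = ((-α) ^ (1 + θ) / (θ - 2 * α)) * (a ^ θ * b ^ (2 * α + 1 - θ)) := by rw [ebb2]
    have h1 := hP1.trans hA1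
    have h2 := hP2.trans_eq hA2
    rw [← hsplit, add_mul]
    linarith
  · -- case v < b : single piece
    have hMaj2 : IntervalIntegrable (fun r => c₁ * (v - r) ^ α) volume 0 v :=
      (integrable_vsub v α 0 v (by linarith)).const_mul _
    have hI2 : (∫ r in (0:ℝ)..v, c₁ * (v - r) ^ α) = c₁ * (v ^ (α + 1) / (α + 1)) := by
      rw [intervalIntegral.integral_const_mul]
      congr 1
      rw [intervalIntegral.integral_comp_sub_left (fun u : ℝ => u ^ α) v,
        show v - v = (0:ℝ) by ring, show v - (0:ℝ) = v by ring]
      rw [integral_rpow (Or.inl (by linarith : (-1:ℝ) < α))]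
      rw [Real.zero_rpow hα1'.ne']
      ring
    have hP2 : (∫ r in (0:ℝ)..v,
        ((t - r) ^ α - (s - r) ^ α) * ((s - r) ^ α - (v - r) ^ α))
          ≤ c₁ * (v ^ (α + 1) / (α + 1)) := by
      rw [← hI2]
      exact intervalIntegral.integral_mono_on hv.le hFint hMaj2 claim2
    have ebb : b ^ (α - θ) * b ^ (α + 1) = b ^ (2 * α + 1 - θ) := by
      rw [← Real.rpow_add hb]; congr 1; ring
    have hvb : v ^ (α + 1) ≤ b ^ (α + 1) := Real.rpow_le_rpow hv.le hbv.le hα1'.le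
    have hA2 : c₁ * (v ^ (α + 1) / (α + 1))
        ≤ ((-α) ^ θ / (α + 1)) * (a ^ θ * b ^ (2 * α + 1 - θ)) := by
      calc c₁ * (v ^ (α + 1) / (α + 1)) ≤ c₁ * (b ^ (α + 1) / (α + 1)) :=
            mul_le_mul_of_nonneg_left (div_le_div_of_nonneg_right hvb hα1'.le) hc₁
        _ = ((-α) ^ θ / (α + 1)) * (a ^ θ * b ^ (2 * α + 1 - θ)) := by
            rw [hc₁def, ← ebb]; ring
    have hB : 0 ≤ ((-α) ^ (1 + θ) / (θ - 2 * α)) * (a ^ θ * b ^ (2 * α + 1 - θ)) := by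
      positivity
    rw [add_mul]
    linarith [hP2.trans hA2]

end RLX

/-- **Riemann–Liouville cross-covariance estimate** (from the proof of Lemma B.2): for
`H ∈ (0,1/2)`, `β' ∈ (0,H)` and `β ∈ (H,1/2)` there is a constant `C = C(H,β,β') > 0` such
that for all `0 ≤ v ≤ s ≤ t`,
`0 ≤ ∫_0^v ((t-r)^{H-1/2} - (s-r)^{H-1/2})·((s-r)^{H-1/2} - (v-r)^{H-1/2}) dr
    ≤ C·(((t-s)^β (s-v)^β) ∨ ((t-s)^{β'} (s-v)^{β'}))`. -/
theorem rl_cross_covariance_bound (H β β' : ℝ)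
    (hH₀ : 0 < H) (hH₁ : H < 1 / 2)
    (hβ'₀ : 0 < β') (hβ'H : β' < H) (hHβ : H < β) (hβ : β < 1 / 2) :
    ∃ C : ℝ, 0 < C ∧
      ∀ v s t : ℝ, 0 ≤ v → v ≤ s → s ≤ t →
        0 ≤ (∫ r in (0:ℝ)..v,
              ((t - r) ^ (H - 1 / 2) - (s - r) ^ (H - 1 / 2))
                * ((s - r) ^ (H - 1 / 2) - (v - r) ^ (H - 1 / 2)))
        ∧ (∫ r in (0:ℝ)..v,
              ((t - r) ^ (H - 1 / 2) - (s - r) ^ (H - 1 / 2))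
                * ((s - r) ^ (H - 1 / 2) - (v - r) ^ (H - 1 / 2)))
            ≤ C * max ((t - s) ^ β * (s - v) ^ β) ((t - s) ^ β' * (s - v) ^ β') := by
  have hα₂ : H - 1 / 2 < 0 := by linarith
  have hα₁ : -(1:ℝ)/2 < H - 1 / 2 := by linarith
  have hna : (0:ℝ) < -(H - 1 / 2) := by linarith
  have hKβpos : 0 < (-(H - 1 / 2)) ^ β / ((H - 1 / 2) + 1)
      + (-(H - 1 / 2)) ^ (1 + β) / (β - 2 * (H - 1 / 2)) :=
    add_pos (div_pos (Real.rpow_pos_of_pos hna _) (by linarith))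
      (div_pos (Real.rpow_pos_of_pos hna _) (by linarith))
  have hKβ'pos : 0 < (-(H - 1 / 2)) ^ β' / ((H - 1 / 2) + 1)
      + (-(H - 1 / 2)) ^ (1 + β') / (β' - 2 * (H - 1 / 2)) :=
    add_pos (div_pos (Real.rpow_pos_of_pos hna _) (by linarith))
      (div_pos (Real.rpow_pos_of_pos hna _) (by linarith))
  refine ⟨((-(H - 1 / 2)) ^ β / ((H - 1 / 2) + 1)
      + (-(H - 1 / 2)) ^ (1 + β) / (β - 2 * (H - 1 / 2)))
    + ((-(H - 1 / 2)) ^ β' / ((H - 1 / 2) + 1)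
      + (-(H - 1 / 2)) ^ (1 + β') / (β' - 2 * (H - 1 / 2))), by linarith, ?_⟩
  intro v s t hv hvs hst
  have hts : (0:ℝ) ≤ t - s := by linarith
  have hsv : (0:ℝ) ≤ s - v := by linarith
  have hmax0 : 0 ≤ max ((t - s) ^ β * (s - v) ^ β) ((t - s) ^ β' * (s - v) ^ β') :=
    le_trans (mul_nonneg (Real.rpow_nonneg hts _) (Real.rpow_nonneg hsv _)) (le_max_left _ _)
  refine ⟨RLX.nonneg_int (H - 1 / 2) v s t hα₂ hv hvs hst, ?_⟩
  rcases eq_or_lt_of_le hv with hv0 | hv0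
  · have hI : (∫ r in (0:ℝ)..v,
        ((t - r) ^ (H - 1 / 2) - (s - r) ^ (H - 1 / 2))
          * ((s - r) ^ (H - 1 / 2) - (v - r) ^ (H - 1 / 2))) = 0 := by
      rw [← hv0]
      exact intervalIntegral.integral_same
    rw [hI]; exact mul_nonneg (by linarith) hmax0
  rcases eq_or_lt_of_le hst with hst0 | hst0
  · have hI : (∫ r in (0:ℝ)..v,
        ((t - r) ^ (H - 1 / 2) - (s - r) ^ (H - 1 / 2))
          * ((s - r) ^ (H - 1 / 2) - (v - r) ^ (H - 1 / 2))) = 0 := by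
      rw [← hst0]
      simp
    rw [hI]; exact mul_nonneg (by linarith) hmax0
  rcases eq_or_lt_of_le hvs with hvs0 | hvs0
  · have hI : (∫ r in (0:ℝ)..v,
        ((t - r) ^ (H - 1 / 2) - (s - r) ^ (H - 1 / 2))
          * ((s - r) ^ (H - 1 / 2) - (v - r) ^ (H - 1 / 2))) = 0 := by
      rw [hvs0]
      simp
    rw [hI]; exact mul_nonneg (by linarith) hmax0
  have h1 := RLX.key (H - 1 / 2) β (t - s) (s - v) v s t hα₁ hα₂ (by linarith) (by linarith)
    hv0 (by linarith) (by linarith) (by ring) (by ring)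
  have h2 := RLX.key (H - 1 / 2) β' (t - s) (s - v) v s t hα₁ hα₂ hβ'₀ (by linarith)
    hv0 (by linarith) (by linarith) (by ring) (by ring)
  rcases le_or_gt 1 (s - v) with hb1 | hb1
  · -- use the β bound
    have hexp : (s - v) ^ (2 * (H - 1 / 2) + 1 - β) ≤ (s - v) ^ β := by
      rw [show 2 * (H - 1 / 2) + 1 - β = 2 * H - β by ring]
      exact Real.rpow_le_rpow_of_exponent_le hb1 (by linarith)
    have harg : (t - s) ^ β * (s - v) ^ (2 * (H - 1 / 2) + 1 - β)
        ≤ (t - s) ^ β * (s - v) ^ β :=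
      mul_le_mul_of_nonneg_left hexp (Real.rpow_nonneg hts _)
    refine h1.trans (le_trans (mul_le_mul_of_nonneg_left harg hKβpos.le) ?_)
    exact mul_le_mul (by linarith) (le_max_left _ _)
      (mul_nonneg (Real.rpow_nonneg hts _) (Real.rpow_nonneg hsv _)) (by linarith)
  · -- use the β' bound
    have hexp : (s - v) ^ (2 * (H - 1 / 2) + 1 - β') ≤ (s - v) ^ β' := by
      rw [show 2 * (H - 1 / 2) + 1 - β' = 2 * H - β' by ring]
      exact Real.rpow_le_rpow_of_exponent_ge (by linarith) hb1.le (by linarith)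
    have harg : (t - s) ^ β' * (s - v) ^ (2 * (H - 1 / 2) + 1 - β')
        ≤ (t - s) ^ β' * (s - v) ^ β' :=
      mul_le_mul_of_nonneg_left hexp (Real.rpow_nonneg hts _)
    refine h2.trans (le_trans (mul_le_mul_of_nonneg_left harg hKβ'pos.le) ?_)
    exact mul_le_mul (by linarith) (le_max_right _ _)
      (mul_nonneg (Real.rpow_nonneg hts _) (Real.rpow_nonneg hsv _)) (by linarith)
end

section
/- Let H ∈ (0,1/2) and define f : (0,∞) → ℝ by f(x) := x^{H−1/2} + (H−3/2)·x·∫_0^1 (u+x)^{H−5/2}·(1−u)^{1/2−H} du. Then for every x ≥ 1, x^{H−1/2} + (H−3/2)·x^{H−3/2} ≤ f(x) ≤ x^{H−1/2}. -/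
/-- The kernel `f(x) = x^{H-1/2} + (H-3/2)·x·∫_0^1 (u+x)^{H-5/2}(1-u)^{1/2-H} du`
appearing in the conditioning operator `𝒜` for fractional Brownian motion. -/
noncomputable def fKer (H : ℝ) (x : ℝ) : ℝ :=
  x ^ (H - 1 / 2)
    + (H - 3 / 2) * x * ∫ u in (0:ℝ)..1, (u + x) ^ (H - 5 / 2) * (1 - u) ^ (1 / 2 - H)

/-- **Two-sided bound for the kernel `f` for `x ≥ 1`** (from the proof of Lemma D.1):
for `H ∈ (0,1/2)` and every `x ≥ 1`,
`x^{H-1/2} + (H-3/2)·x^{H-3/2} ≤ f(x) ≤ x^{H-1/2}`. -/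
theorem fKer_two_sided_bound (H : ℝ) (hH₀ : 0 < H) (hH₁ : H < 1 / 2) :
    ∀ x : ℝ, 1 ≤ x →
      x ^ (H - 1 / 2) + (H - 3 / 2) * x ^ (H - 3 / 2) ≤ fKer H x
        ∧ fKer H x ≤ x ^ (H - 1 / 2) := by
  intro x hx
  have hx0 : (0:ℝ) < x := lt_of_lt_of_le one_pos hx
  have hc : H - 3 / 2 < 0 := by linarith
  set I := ∫ u in (0:ℝ)..1, (u + x) ^ (H - 5 / 2) * (1 - u) ^ (1 / 2 - H) with hI
  -- continuity / integrability
  have hcont : ContinuousOn (fun u : ℝ => (u + x) ^ (H - 5 / 2) * (1 - u) ^ (1 / 2 - H))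
      (Set.Icc 0 1) := by
    apply ContinuousOn.mul
    · apply ContinuousOn.rpow_const (by fun_prop)
      intro u hu
      left
      have := hu.1
      positivity
    · apply ContinuousOn.rpow_const (by fun_prop)
      intro u hu
      right; linarith
  have hint : IntervalIntegrable (fun u : ℝ => (u + x) ^ (H - 5 / 2) * (1 - u) ^ (1 / 2 - H))
      MeasureTheory.volume 0 1 := by
    have heq : Set.uIcc (0:ℝ) 1 = Set.Icc 0 1 := Set.uIcc_of_le (by norm_num)
    exact ContinuousOn.intervalIntegrable (heq ▸ hcont)
  -- I ≥ 0
  have hI0 : 0 ≤ I := by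
    apply intervalIntegral.integral_nonneg (by norm_num)
    intro u hu
    have h1 : (0:ℝ) ≤ u + x := by linarith [hu.1]
    have h2 : (0:ℝ) ≤ 1 - u := by linarith [hu.2]
    positivity
  -- I ≤ x^(H-5/2)
  have hIle : I ≤ x ^ (H - 5 / 2) := by
    have := intervalIntegral.integral_mono_on (a := (0:ℝ)) (b := 1) (by norm_num) hint
      (intervalIntegrable_const (c := x ^ (H - 5 / 2)))
      (fun u hu => by
        have h2 : (0:ℝ) ≤ 1 - u := by linarith [hu.2]
        calc (u + x) ^ (H - 5 / 2) * (1 - u) ^ (1 / 2 - H)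
            ≤ x ^ (H - 5 / 2) * 1 := by
              apply mul_le_mul
              · exact Real.rpow_le_rpow_of_nonpos hx0 (by linarith [hu.1]) (by linarith)
              · exact Real.rpow_le_one h2 (by linarith [hu.1]) (by linarith)
              · positivity
              · positivity
          _ = x ^ (H - 5 / 2) := mul_one _)
    rw [hI, show (1:ℝ) / 2 - H = 2⁻¹ - H by norm_num]
    simpa using this
  have hxpow : x * x ^ (H - 5 / 2) = x ^ (H - 3 / 2) := by
    rw [show H - 3 / 2 = 1 + (H - 5 / 2) by ring, Real.rpow_add hx0, Real.rpow_one]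
  constructor
  · show x ^ (H - 1 / 2) + (H - 3 / 2) * x ^ (H - 3 / 2) ≤
      x ^ (H - 1 / 2) + (H - 3 / 2) * x * I
    have h1 : (H - 3 / 2) * x * I ≥ (H - 3 / 2) * x * x ^ (H - 5 / 2) := by
      apply mul_le_mul_of_nonpos_left hIle (by nlinarith)
    have h2 : (H - 3 / 2) * x * x ^ (H - 5 / 2) = (H - 3 / 2) * x ^ (H - 3 / 2) := by
      rw [mul_assoc, hxpow]
    linarith
  · show x ^ (H - 1 / 2) + (H - 3 / 2) * x * I ≤ x ^ (H - 1 / 2)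
    have h3 : (H - 3 / 2) * x * I ≤ 0 :=
      mul_nonpos_of_nonpos_of_nonneg (by nlinarith) hI0
    linarith
end

section
/- For any γ ∈ (0,1) and δ > 0, the space of smooth compactly supported functions w : (−∞,0] → ℝ^d, equipped with the norm ‖w‖_{γ,δ} := sup_{s,t ≤ 0, s ≠ t} |w_t − w_s| / (|t−s|^γ·(1+|t|+|s|)^δ), is a separable normed space; consequently its completion W⁻_{γ,δ} is a separable Banach space. -/
/-- A smooth compactly supported path on the negative half-line `(-∞,0]`, modelled as a smooth
function on `ℝ` whose (closed) support is compact and contained in `(-∞,0]`. -/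
def SmoothCpt (d : ℕ) (w : ℝ → EuclideanSpace ℝ (Fin d)) : Prop :=
  ContDiff ℝ (⊤ : ℕ∞) w ∧ HasCompactSupport w ∧ tsupport w ⊆ Set.Iic 0

/-- Quantitative bound on the weighted Hölder quotient in terms of a Lipschitz constant
and a sup bound. -/
lemma ratio_bound {E : Type*} [NormedAddCommGroup E] {γ δ : ℝ}
    (hγ₀ : 0 < γ) (hγ₁ : γ < 1) (hδ : 0 < δ) {u : ℝ → E} {L M : ℝ} (hL : 0 ≤ L) (hM : 0 ≤ M)
    (hLip : ∀ s t : ℝ, ‖u t - u s‖ ≤ L * |t - s|)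
    (hBd : ∀ x : ℝ, ‖u x‖ ≤ M) {s t : ℝ} (hst : s ≠ t) :
    ‖u t - u s‖ / (|t - s| ^ γ * (1 + |t| + |s|) ^ δ) ≤ L + 2 * M := by
  have hd : 0 < |t - s| := abs_pos.2 (sub_ne_zero.2 (Ne.symm hst))
  have hA : 0 < |t - s| ^ γ := Real.rpow_pos_of_pos hd γ
  have hB : (1:ℝ) ≤ (1 + |t| + |s|) ^ δ := by
    apply Real.one_le_rpow _ hδ.le
    have := abs_nonneg t; have := abs_nonneg s; linarith
  rw [div_le_iff₀ (by positivity)]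
  have key : ‖u t - u s‖ ≤ (L + 2 * M) * |t - s| ^ γ := by
    rcases le_or_gt |t - s| 1 with h1 | h1
    · have h2 : |t - s| ≤ |t - s| ^ γ := by
        calc |t - s| = |t - s| ^ (1:ℝ) := (Real.rpow_one _).symm
          _ ≤ |t - s| ^ γ := Real.rpow_le_rpow_of_exponent_ge hd h1 hγ₁.le
      calc ‖u t - u s‖ ≤ L * |t - s| := hLip s t
        _ ≤ L * |t - s| ^ γ := mul_le_mul_of_nonneg_left h2 hL
        _ ≤ (L + 2 * M) * |t - s| ^ γ := by nlinarith
    · have hA1 : (1:ℝ) ≤ |t - s| ^ γ := Real.one_le_rpow h1.le hγ₀.le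
      calc ‖u t - u s‖ ≤ ‖u t‖ + ‖u s‖ := norm_sub_le _ _
        _ ≤ 2 * M := by linarith [hBd t, hBd s]
        _ ≤ 2 * M * |t - s| ^ γ := le_mul_of_one_le_right (by linarith) hA1
        _ ≤ (L + 2 * M) * |t - s| ^ γ := by nlinarith
  calc ‖u t - u s‖ ≤ (L + 2 * M) * |t - s| ^ γ := key
    _ ≤ (L + 2 * M) * (|t - s| ^ γ * (1 + |t| + |s|) ^ δ) := by
        apply mul_le_mul_of_nonneg_left _ (by linarith)
        exact le_mul_of_one_le_right hA.le hB

/-- Lipschitz estimate from a global bound on the derivative. -/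
lemma lip_of_deriv_bound {E : Type*} [NormedAddCommGroup E] [NormedSpace ℝ E]
    {u : ℝ → E} {L : ℝ} (hu : Differentiable ℝ u) (hL : ∀ x : ℝ, ‖deriv u x‖ ≤ L)
    (s t : ℝ) : ‖u t - u s‖ ≤ L * |t - s| := by
  have := Convex.norm_image_sub_le_of_norm_deriv_le (f := u) (C := L)
    (fun x _ => (hu x)) (fun x _ => hL x) convex_univ (Set.mem_univ s) (Set.mem_univ t)
  simpa [Real.norm_eq_abs] using this

/-- **Separability of the weighted Hölder space `W⁻_{γ,δ}`** (Lemma 2.5, separability part):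
for `γ ∈ (0,1)` and `δ > 0`, the smooth compactly supported functions `w : (-∞,0] → ℝ^d`,
equipped with the norm `‖w‖_{γ,δ} = sup_{s,t ≤ 0, s ≠ t} |w_t - w_s|/(|t-s|^γ (1+|t|+|s|)^δ)`
(which is finite on this class), form a separable normed space: there is a countable subset
`D` of this class which is dense in the `‖·‖_{γ,δ}`-distance. -/
theorem weighted_holder_space_separable (d : ℕ) (γ δ : ℝ)
    (hγ₀ : 0 < γ) (hγ₁ : γ < 1) (hδ : 0 < δ) :
    -- the norm is finite on the class of smooth compactly supported paths
    (∀ w : ℝ → EuclideanSpace ℝ (Fin d), SmoothCpt d w →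
      BddAbove {q : ℝ | ∃ s t : ℝ, s ≤ 0 ∧ t ≤ 0 ∧ s ≠ t ∧
        q = ‖w t - w s‖ / (|t - s| ^ γ * (1 + |t| + |s|) ^ δ)})
    -- and there is a countable dense subset
    ∧ ∃ D : Set (ℝ → EuclideanSpace ℝ (Fin d)),
        D.Countable ∧ (∀ v ∈ D, SmoothCpt d v) ∧
        ∀ w : ℝ → EuclideanSpace ℝ (Fin d), SmoothCpt d w →
          ∀ ε : ℝ, 0 < ε → ∃ v ∈ D,
            ∀ s t : ℝ, s ≤ 0 → t ≤ 0 → s ≠ t →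
              ‖(w t - v t) - (w s - v s)‖ / (|t - s| ^ γ * (1 + |t| + |s|) ^ δ) ≤ ε := by
  classical
  set E := EuclideanSpace ℝ (Fin d) with hE
  constructor
  · -- boundedness
    rintro w ⟨hsm, hcpt, -⟩
    obtain ⟨M, hM⟩ : ∃ M, ∀ x : ℝ, ‖w x‖ ≤ M := by
      obtain ⟨M, hM⟩ := (hcpt.norm).exists_bound_of_continuous hsm.continuous.norm
      exact ⟨M, fun x => by simpa using hM x⟩
    obtain ⟨L, hLbd⟩ : ∃ L, ∀ x : ℝ, ‖deriv w x‖ ≤ L := by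
      obtain ⟨L, hL⟩ := (hcpt.deriv.norm).exists_bound_of_continuous
        ((hsm.continuous_deriv (by simp)).norm)
      exact ⟨L, fun x => by simpa using hL x⟩
    have hL0 : 0 ≤ L := le_trans (norm_nonneg _) (hLbd 0)
    have hM0 : 0 ≤ M := le_trans (norm_nonneg _) (hM 0)
    refine ⟨L + 2 * M, ?_⟩
    rintro q ⟨s, t, hs, ht, hst, rfl⟩
    exact ratio_bound hγ₀ hγ₁ hδ hL0 hM0
      (lip_of_deriv_bound (hsm.differentiable (by simp)) hLbd) hM hst
  · -- separability
    -- per-n countable dense families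
    have main : ∀ n : ℕ, ∃ Dn : Set (ℝ → E), Dn.Countable ∧
        (∀ v ∈ Dn, SmoothCpt d v ∧ tsupport v ⊆ Set.Icc (-(n:ℝ)) 0) ∧
        ∀ w : ℝ → E, SmoothCpt d w → tsupport w ⊆ Set.Icc (-(n:ℝ)) 0 →
          ∀ ε : ℝ, 0 < ε → ∃ v ∈ Dn,
            (∀ x : ℝ, ‖w x - v x‖ ≤ ε) ∧ (∀ x : ℝ, ‖deriv w x - deriv v x‖ ≤ ε) := by
      intro n
      set K : Set ℝ := Set.Icc (-(n:ℝ)) 0 with hK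
      set Y := C(K, E) × C(K, E) with hY
      set A : Set Y := {p | ∃ w : ℝ → E, (SmoothCpt d w ∧ tsupport w ⊆ K) ∧
        (∀ x : K, p.1 x = w x) ∧ (∀ x : K, p.2 x = deriv w x)} with hA
      obtain ⟨c, hc_count, hc_dense⟩ := TopologicalSpace.exists_countable_dense ↥A
      refine ⟨(fun p : ↥A => Classical.choose p.2) '' c, hc_count.image _, ?_, ?_⟩
      · rintro v ⟨p, -, rfl⟩
        exact (Classical.choose_spec p.2).1
      · intro w hw hsupp ε hε
        have hwc : Continuous w := hw.1.continuous
        have hw'c : Continuous (deriv w) := hw.1.continuous_deriv (by simp)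
        set pw : Y := (⟨fun x : K => w x, hwc.comp continuous_subtype_val⟩,
          ⟨fun x : K => deriv w x, hw'c.comp continuous_subtype_val⟩) with hpw
        have hpwA : pw ∈ A := ⟨w, ⟨hw, hsupp⟩, fun _ => rfl, fun _ => rfl⟩
        obtain ⟨y, hy⟩ := Metric.dense_iff.1 hc_dense ⟨pw, hpwA⟩ ε hε
        obtain ⟨hyb, hyc⟩ := hy
        set v : ℝ → E := Classical.choose y.2 with hv
        obtain ⟨⟨hvsm, hvsupp⟩, hv1, hv2⟩ := Classical.choose_spec y.2
        refine ⟨v, ⟨y, hyc, rfl⟩, ?_, ?_⟩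
        · intro x
          by_cases hx : x ∈ K
          · have h1 : dist (pw.1 ⟨x, hx⟩) ((y : Y).1 ⟨x, hx⟩) ≤ dist pw.1 (y : Y).1 :=
              ContinuousMap.dist_apply_le_dist _
            have h2 : dist pw.1 (y : Y).1 < ε :=
              lt_of_le_of_lt (le_max_left _ _) (by
                rw [← Prod.dist_eq]
                simpa [Subtype.dist_eq, dist_comm] using hyb)
            have := (h1.trans h2.le)
            rw [dist_eq_norm, hv1 ⟨x, hx⟩] at this
            exact this
          · have hxw : w x = 0 :=
              image_eq_zero_of_notMem_tsupport (fun h => hx (hsupp h))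
            have hxv : v x = 0 :=
              image_eq_zero_of_notMem_tsupport (fun h => hx (hvsupp h))
            simp [hxw, hxv, hε.le]
        · intro x
          by_cases hx : x ∈ K
          · have h1 : dist (pw.2 ⟨x, hx⟩) ((y : Y).2 ⟨x, hx⟩) ≤ dist pw.2 (y : Y).2 :=
              ContinuousMap.dist_apply_le_dist _
            have h2 : dist pw.2 (y : Y).2 < ε :=
              lt_of_le_of_lt (le_max_right _ _) (by
                rw [← Prod.dist_eq]
                simpa [Subtype.dist_eq, dist_comm] using hyb)
            have := (h1.trans h2.le)
            rw [hv]
            rw [dist_eq_norm, hv2 ⟨x, hx⟩] at this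
            exact this
          · have hxw : deriv w x = 0 := by
              have : x ∉ Function.support (deriv w) :=
                fun h => hx (hsupp (support_deriv_subset h))
              simpa [Function.mem_support, not_not] using this
            have hxv : deriv v x = 0 := by
              have : x ∉ Function.support (deriv v) :=
                fun h => hx (hvsupp (support_deriv_subset h))
              simpa [Function.mem_support, not_not] using this
            simp [hxw, hxv, hε.le]
    choose Dn hcount hmem hdens using main
    refine ⟨⋃ n, Dn n, Set.countable_iUnion hcount, ?_, ?_⟩
    · rintro v hv
      obtain ⟨n, hn⟩ := Set.mem_iUnion.1 hv
      exact (hmem n v hn).1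
    · intro w hw ε hε
      -- find n containing the support
      obtain ⟨r, hr⟩ := (hw.2.1.isBounded).subset_closedBall 0
      obtain ⟨n, hn⟩ := exists_nat_ge r
      have hsupp : tsupport w ⊆ Set.Icc (-(n:ℝ)) 0 := by
        intro x hx
        have h1 := hr hx
        rw [Real.closedBall_eq_Icc] at h1
        exact ⟨by linarith [h1.1], hw.2.2 hx⟩
      obtain ⟨v, hvD, hv1, hv2⟩ := hdens n w hw hsupp (ε / 3) (by linarith)
      refine ⟨v, Set.mem_iUnion.2 ⟨n, hvD⟩, ?_⟩
      intro s t hs ht hst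
      have hvsm := (hmem n v hvD).1
      have hdiff : Differentiable ℝ (fun x => w x - v x) :=
        (hw.1.differentiable (by simp)).sub (hvsm.1.differentiable (by simp))
      have hderiv : ∀ x : ℝ, deriv (fun x => w x - v x) x = deriv w x - deriv v x := by
        intro x
        exact deriv_sub ((hw.1.differentiable (by simp)) x) ((hvsm.1.differentiable (by simp)) x)
      have hLip : ∀ s t : ℝ, ‖(fun x => w x - v x) t - (fun x => w x - v x) s‖ ≤
          (ε / 3) * |t - s| := by
        apply lip_of_deriv_bound hdiff
        intro x; rw [hderiv x]; exact hv2 x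
      have := ratio_bound (u := fun x => w x - v x) (L := ε / 3) (M := ε / 3)
        hγ₀ hγ₁ hδ (by linarith) (by linarith) hLip hv1 hst
      calc ‖(w t - v t) - (w s - v s)‖ / (|t - s| ^ γ * (1 + |t| + |s|) ^ δ)
          ≤ ε / 3 + 2 * (ε / 3) := this
        _ ≤ ε := by linarith
end
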